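/- Mutual exclusion of sub-tracks: in any reachable state of the network of TIOAs of a track-based model, each sub-track actor is in location Occupied with a non-null movingPlan for at most one moving object at a time; consequently, two distinct moving-object messages are never simultaneously stored in the same actor's movingPlan variable, so collisions within a sub-track are avoided by construction. -/
import Mathlib


/- Network of sub-track actors: each actor has a location (Free/Occupied) and one
movingPlan variable.  Moving objects are messages transferred by synchronizing a
Send edge of the sender (Occupied → Free, emptying its plan) with a Receive edge of
the receiver (Free → Occupied, storing the updated message); a receiver can only
receive in location Free.  Boundary interactions let a message enter (into a Free
actor) or leave the network. -/

inductive SLoc | Free | Occupied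
deriving DecidableEq

structure NState (ι Msg : Type) where
  loc : ι → SLoc
  plan : ι → Option Msg

inductive NStep {ι Msg : Type} [DecidableEq ι]
    (update : Msg → Msg) (conn : ι → ι → Prop) : NState ι Msg → NState ι Msg → Prop
  | transfer (s : NState ι Msg) (i j : ι) (m : Msg) :
      i ≠ j → conn i j →
      s.loc i = SLoc.Occupied → s.plan i = some m →
      s.loc j = SLoc.Free → s.plan j = none →
      NStep update conn s
        ⟨Function.update (Function.update s.loc i SLoc.Free) j SLoc.Occupied,
         Function.update (Function.update s.plan i none) j (some (update m))⟩
  | sendOut (s : NState ι Msg) (i : ι) (m : Msg) :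
      s.loc i = SLoc.Occupied → s.plan i = some m →
      NStep update conn s
        ⟨Function.update s.loc i SLoc.Free, Function.update s.plan i none⟩
  | receiveIn (s : NState ι Msg) (j : ι) (m : Msg) :
      s.loc j = SLoc.Free → s.plan j = none →
      NStep update conn s
        ⟨Function.update s.loc j SLoc.Occupied, Function.update s.plan j (some m)⟩

/-- The mutual-exclusion invariant: an actor in location Free stores no message. -/
def FreeEmpty {ι Msg : Type} (s : NState ι Msg) : Prop :=
  ∀ i, s.loc i = SLoc.Free → s.plan i = none

/-- in any reachable state of the network, each sub-track actor stores
at most one moving-object message (two messages stored in the same actor's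
movingPlan are equal) and every Free actor has an empty movingPlan — so collisions
within a sub-track are avoided by construction. -/
theorem subtrack_mutual_exclusion {ι Msg : Type} [DecidableEq ι]
    (update : Msg → Msg) (conn : ι → ι → Prop)
    (s0 s : NState ι Msg) (h0 : FreeEmpty s0)
    (hreach : Relation.ReflTransGen (NStep update conn) s0 s) :
    FreeEmpty s ∧
    ∀ (i : ι) (m1 m2 : Msg), s.plan i = some m1 → s.plan i = some m2 → m1 = m2 := by
  have hfe : FreeEmpty s := by
    induction hreach with
    | refl => exact h0
    | tail _ hstep ih =>
      cases hstep with
      | transfer i j m hij hconn hli hpi hlj hpj =>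
        intro k hk
        simp only [Function.update] at hk ⊢
        by_cases hkj : k = j
        · subst hkj; simp_all
        · by_cases hki : k = i
          · subst hki; simp_all
          · simp_all [ih k]
      | sendOut i m hli hpi =>
        intro k hk
        simp only [Function.update] at hk ⊢
        by_cases hki : k = i
        · subst hki; simp_all
        · simp_all [ih k]
      | receiveIn j m hlj hpj =>
        intro k hk
        simp only [Function.update] at hk ⊢
        by_cases hkj : k = j
        · subst hkj; simp_all
        · simp_all [ih k]
  refine ⟨hfe, fun i m1 m2 h1 h2 => ?_⟩
  rw [h1] at h2; exact Option.some_injective _ h2
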